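/- Let f: ℝ^m → ℝ^m be given by f(a)_i = 1 - 1/(1 + sum_j d_{ij} a_j) with nonnegative integers d_{ij}. If a vector l ∈ [0,1]^m satisfies l ≥ f(a) whenever l ≥ a componentwise (i.e., l_i ≥ 1 - 1/(1 + sum_j d_{ij} a_j) for every a with 0 ≤ a ≤ l), and l_i ≥ δ_i > 0 for all i, then l dominates every fixed point of f in [0,1]^m reachable by iterating f from the vector (δ_1,...,δ_m); in particular, iterating the monotone map f from any positive starting vector below the escape probability vector E converges to a fixed point dominated by l. -/

import Mathlib

/-! The map `F = escapeMap d` is monotone on the nonnegative orthant and subhomogeneous: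
`s • F a ≤ F (s • a)` for `s ∈ [0, 1]`, strictly at the coordinates where `F a` is positive when
`0 < s < 1`. Hence the iterates from `t • E` increase to a fixed point `x` with `t • E ≤ x ≤ E`,
and if `s • E` is the largest multiple of `E` below `x`, strict subhomogeneity at a coordinate
where `s • E` touches `x` forces `s = 1`, i.e. `x = E`. Iterates from any `a₀` with
`t • E ≤ a₀ ≤ E` are squeezed between those from `t • E` and the constant sequence `E`, so they
converge to `E`. Finally `[0, l]` is closed and invariant, so it contains every limit of iterates
from `δ`, in particular `E`. -/

open Filter Function Set Topology

section IterateMonotoneOn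

variable {α : Type*} [Preorder α] {f : α → α} {s : Set α}

theorem MonotoneOn.iterate_le_iterate (hf : MonotoneOn f s) (hs : MapsTo f s s) {x y : α}
    (hx : x ∈ s) (hy : y ∈ s) (hxy : x ≤ y) (n : ℕ) : f^[n] x ≤ f^[n] y := by
  induction n with
  | zero => exact hxy
  | succ n ih =>
    rw [iterate_succ_apply', iterate_succ_apply']
    exact hf (hs.iterate n hx) (hs.iterate n hy) ih

theorem MonotoneOn.monotone_iterate_of_le_map (hf : MonotoneOn f s) (hs : MapsTo f s s) {x : α}
    (hx : x ∈ s) (hxf : x ≤ f x) : Monotone fun n => f^[n] x :=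
  monotone_nat_of_le_succ fun n => by
    rw [iterate_succ_apply]
    exact hf.iterate_le_iterate hs hx (hs hx) hxf n

end IterateMonotoneOn

theorem exists_pos_smul_le {ι : Type*} [Finite ι] {a v : ι → ℝ} (ha : ∀ i, 0 < a i)
    (hv : ∀ i, 0 ≤ v i ∧ v i ≤ 1) : ∃ t : ℝ, 0 < t ∧ t ≤ 1 ∧ t • v ≤ a := by
  have hsmall : ∀ᶠ t in 𝓝[>] 0, t ∈ Ioc 0 1 ∧ ∀ i, t ∈ Ioc 0 (a i) :=
    .and (Ioc_mem_nhdsGT one_pos) (eventually_all.2 fun i => Ioc_mem_nhdsGT (ha i))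
  obtain ⟨t, ⟨ht, ht₁⟩, hta⟩ := hsmall.exists
  refine ⟨t, ht, ht₁, fun i => ?_⟩
  calc t * v i ≤ t * 1 := by gcongr; exact (hv i).2
    _ ≤ a i := by simpa using (hta i).2

theorem one_sub_one_div_one_add_mul_sub {s A : ℝ} (hA : 1 + A ≠ 0) (hsA : 1 + s * A ≠ 0) :
    (1 - 1 / (1 + s * A)) - s * (1 - 1 / (1 + A)) =
      s * (1 - s) * A ^ 2 / ((1 + s * A) * (1 + A)) := by
  field_simp
  ring

variable {ι : Type*} [Fintype ι]

-- The escape probabilities of simple random walk on a directed cover form a fixed point.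
noncomputable def escapeMap (d : ι → ι → ℝ) (a : ι → ℝ) (i : ι) : ℝ :=
  1 - 1 / (1 + ∑ j, d i j * a j)

namespace escapeMap

variable {d : ι → ι → ℝ}

theorem sum_nonneg (hd : 0 ≤ d) {a : ι → ℝ} (ha : 0 ≤ a) (i : ι) :
    0 ≤ ∑ j, d i j * a j :=
  Finset.sum_nonneg fun j _ => mul_nonneg (hd i j) (ha j)

theorem nonneg (hd : 0 ≤ d) {a : ι → ℝ} (ha : 0 ≤ a) : 0 ≤ escapeMap d a := fun i => by
  have := sum_nonneg hd ha i
  rw [Pi.zero_apply, escapeMap, sub_nonneg, div_le_one (by linarith)]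
  linarith

theorem mapsTo_nonneg (hd : 0 ≤ d) : MapsTo (escapeMap d) (Ici 0) (Ici 0) := fun _ => nonneg hd

theorem monotoneOn (hd : 0 ≤ d) : MonotoneOn (escapeMap d) (Ici 0) :=
  fun a ha b _ hab i => by
  have hsum : ∑ j, d i j * a j ≤ ∑ j, d i j * b j :=
    Finset.sum_le_sum fun j _ => mul_le_mul_of_nonneg_left (hab j) (hd i j)
  have := sum_nonneg hd ha i
  unfold escapeMap
  gcongr

theorem continuousAt (hd : 0 ≤ d) {a : ι → ℝ} (ha : 0 ≤ a) :
    ContinuousAt (escapeMap d) a := by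
  refine continuousAt_pi.2 fun i => ?_
  have hsum : Continuous fun b : ι → ℝ => ∑ j, d i j * b j :=
    continuous_finsetSum _ fun j _ => by fun_prop
  have := sum_nonneg hd ha i
  exact continuousAt_const.sub <|
    continuousAt_const.div (continuousAt_const.add hsum.continuousAt) (by linarith)

theorem apply_smul_sub_mul (hd : 0 ≤ d) {a : ι → ℝ} (ha : 0 ≤ a) {s : ℝ} (hs : 0 ≤ s)
    (i : ι) :
    escapeMap d (s • a) i - s * escapeMap d a i =
      s * (1 - s) * (∑ j, d i j * a j) ^ 2 /
        ((1 + s * ∑ j, d i j * a j) * (1 + ∑ j, d i j * a j)) := by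
  have := sum_nonneg hd ha i
  have hmul : ∑ j, d i j * (s • a) j = s * ∑ j, d i j * a j := by
    simp only [Pi.smul_apply, smul_eq_mul, Finset.mul_sum]
    exact Finset.sum_congr rfl fun j _ => by ring
  rw [escapeMap, escapeMap, hmul]
  exact one_sub_one_div_one_add_mul_sub (by positivity) (by positivity)

theorem smul_le_apply_smul (hd : 0 ≤ d) {a : ι → ℝ} (ha : 0 ≤ a) {s : ℝ} (hs : 0 ≤ s)
    (hs₁ : s ≤ 1) :
    s • escapeMap d a ≤ escapeMap d (s • a) := fun i => by
  have := sum_nonneg hd ha i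
  have hsub := apply_smul_sub_mul hd ha hs i
  have : 0 ≤ 1 - s := sub_nonneg.2 hs₁
  rw [Pi.smul_apply, smul_eq_mul, ← sub_nonneg, hsub]
  positivity

theorem mul_lt_apply_smul (hd : 0 ≤ d) {a : ι → ℝ} (ha : 0 ≤ a) {s : ℝ} (hs : 0 < s)
    (hs₁ : s < 1) {i : ι} (hi : 0 < escapeMap d a i) :
    s * escapeMap d a i < escapeMap d (s • a) i := by
  have hA := sum_nonneg hd ha i
  have hA' : ∑ j, d i j * a j ≠ 0 := by
    rintro h
    simp [escapeMap, h] at hi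
  have hsub := apply_smul_sub_mul hd ha hs.le i
  have : 0 < 1 - s := sub_pos.2 hs₁
  rw [← sub_pos, hsub]
  positivity

theorem eq_of_isFixedPt (hd : 0 ≤ d) {x E : ι → ℝ} (hx : IsFixedPt (escapeMap d) x)
    (hE : IsFixedPt (escapeMap d) E) (hE₀ : 0 ≤ E) {t : ℝ} (ht : 0 < t) (hlo : t • E ≤ x)
    (hhi : x ≤ E) : x = E := by
  refine hhi.antisymm fun k => ?_
  by_contra! hk
  have hx₀ : 0 ≤ x := (smul_nonneg ht.le hE₀).trans hlo
  have hEk : 0 < E k := (hx₀ k).trans_lt hk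
  -- `s` is the largest multiple of `E` below `x`.
  obtain ⟨i, hEi, hmin⟩ := Finset.exists_min_image {j | 0 < E j} (fun j => x j / E j)
    ⟨k, by simpa using hEk⟩
  simp only [Finset.mem_filter, Finset.mem_univ, true_and] at hEi hmin
  set s := x i / E i
  have hsE : s • E ≤ x := fun j => by
    rcases (hE₀ j).eq_or_lt with hEj | hEj
    · simpa [← hEj] using hx₀ j
    · exact (le_div_iff₀ hEj).1 (hmin j hEj)
  have hs : 0 < s := div_pos ((mul_pos ht hEi).trans_le (hlo i)) hEi
  have hs₁ : s < 1 := (hmin k hEk).trans_lt ((div_lt_one hEk).2 hk)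
  have hstrict := mul_lt_apply_smul hd hE₀ hs hs₁ (i := i) (by rwa [hE.eq])
  have hmono : escapeMap d (s • E) i ≤ x i := by
    rw [← hx.eq]
    exact monotoneOn hd (smul_nonneg hs.le hE₀) hx₀ hsE i
  rw [hE.eq, div_mul_cancel₀ _ hEi.ne'] at hstrict
  exact hstrict.not_ge hmono

theorem tendsto_iterate_smul (hd : 0 ≤ d) {E : ι → ℝ} (hE : IsFixedPt (escapeMap d) E)
    (hE₀ : 0 ≤ E) {t : ℝ} (ht : 0 < t) (ht₁ : t ≤ 1) :
    Tendsto (fun n => (escapeMap d)^[n] (t • E)) atTop (𝓝 E) := by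
  have htE : t • E ∈ Ici 0 := smul_nonneg ht.le hE₀
  have hmono : Monotone fun n => (escapeMap d)^[n] (t • E) :=
    (monotoneOn hd).monotone_iterate_of_le_map (mapsTo_nonneg hd) htE
      (by simpa only [hE.eq] using smul_le_apply_smul hd hE₀ ht.le ht₁)
  have hle : ∀ n, (escapeMap d)^[n] (t • E) ≤ E := fun n =>
    ((monotoneOn hd).iterate_le_iterate (mapsTo_nonneg hd) htE hE₀
      (smul_le_of_le_one_left hE₀ ht₁) n).trans_eq (hE.iterate n).eq
  have hbdd : BddAbove (range fun n => (escapeMap d)^[n] (t • E)) := ⟨E, forall_mem_range.2 hle⟩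
  have hlim := tendsto_atTop_ciSup hmono hbdd
  have hlo : t • E ≤ ⨆ n, (escapeMap d)^[n] (t • E) := le_ciSup hbdd 0
  have hfix := isFixedPt_of_tendsto_iterate hlim (continuousAt hd (htE.trans hlo))
  rwa [eq_of_isFixedPt hd hfix hE hE₀ ht hlo (ciSup_le hle)] at hlim

theorem tendsto_iterate (hd : 0 ≤ d) {E a : ι → ℝ} (hE : IsFixedPt (escapeMap d) E)
    (hE₀ : 0 ≤ E) {t : ℝ} (ht : 0 < t) (ht₁ : t ≤ 1) (hlo : t • E ≤ a) (hhi : a ≤ E) :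
    Tendsto (fun n => (escapeMap d)^[n] a) atTop (𝓝 E) := by
  have htE : t • E ∈ Ici 0 := smul_nonneg ht.le hE₀
  have hlower := tendsto_iterate_smul hd hE hE₀ ht ht₁
  refine tendsto_pi_nhds.2 fun i => tendsto_of_tendsto_of_tendsto_of_le_of_le
    (tendsto_pi_nhds.1 hlower i) tendsto_const_nhds (fun n => ?_) (fun n => ?_)
  · exact (monotoneOn hd).iterate_le_iterate (mapsTo_nonneg hd) htE (htE.trans hlo) hlo n i
  · exact ((monotoneOn hd).iterate_le_iterate (mapsTo_nonneg hd) (htE.trans hlo) hE₀ hhi n).trans_eq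
      (hE.iterate n).eq i

end escapeMap

theorem stmt_14_general (m : ℕ) (dmat : Fin m → Fin m → ℕ) (l δ E : Fin m → ℝ)
    (f : (Fin m → ℝ) → (Fin m → ℝ))
    (hf : ∀ a i, f a i = 1 - 1 / (1 + ∑ j, (dmat i j : ℝ) * a j))
    (hδ : ∀ i, 0 < δ i ∧ δ i ≤ l i)
    (hE : (∀ i, 0 ≤ E i ∧ E i ≤ 1) ∧ f E = E ∧ ∀ i, δ i ≤ E i)
    (hdom : ∀ a : Fin m → ℝ, (∀ i, 0 ≤ a i) → (∀ i, a i ≤ l i) → ∀ i, f a i ≤ l i) :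
    (∀ x : Fin m → ℝ,
      Filter.Tendsto (fun n => f^[n] δ) Filter.atTop (nhds x) → f x = x →
        ∀ i, x i ≤ l i) ∧
    (∀ a₀ : Fin m → ℝ, (∀ i, 0 < a₀ i) → (∀ i, a₀ i ≤ E i) →
      ∃ x : Fin m → ℝ, Filter.Tendsto (fun n => f^[n] a₀) Filter.atTop (nhds x) ∧
        f x = x ∧ ∀ i, x i ≤ l i) := by
  obtain ⟨hE₀₁, hfE, hδE⟩ := hE
  have hd : 0 ≤ fun i j => (dmat i j : ℝ) := fun _ _ => Nat.cast_nonneg _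
  set F := escapeMap fun i j => (dmat i j : ℝ)
  obtain rfl : f = F := funext fun a => funext (hf a)
  have hE₀ : 0 ≤ E := fun i => (hE₀₁ i).1
  have hinv : MapsTo F (Icc 0 l) (Icc 0 l) := fun a ha =>
    ⟨escapeMap.nonneg hd ha.1, hdom a ha.1 ha.2⟩
  have hbound : ∀ x, Tendsto (fun n => F^[n] δ) atTop (𝓝 x) → x ≤ l := fun x hx =>
    (isClosed_Icc.mem_of_tendsto hx <| .of_forall fun n =>
      hinv.iterate n ⟨fun i => (hδ i).1.le, fun i => (hδ i).2⟩).2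
  have hconv : ∀ a₀, (∀ i, 0 < a₀ i) → a₀ ≤ E → Tendsto (fun n => F^[n] a₀) atTop (𝓝 E) := by
    intro a₀ ha₀ haE
    obtain ⟨t, ht, ht₁, hta⟩ := exists_pos_smul_le ha₀ hE₀₁
    exact escapeMap.tendsto_iterate hd hfE hE₀ ht ht₁ hta haE
  have hEl : E ≤ l := hbound E (hconv δ (fun i => (hδ i).1) hδE)
  exact ⟨fun x hx _ => hbound x hx, fun a₀ ha₀ haE => ⟨E, hconv a₀ ha₀ haE, hfE, hEl⟩⟩

/-- Let `f(a)_i = 1 - 1/(1 + ∑_j d_{ij} a_j)` with nonnegative integers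
`d_{ij}`. Suppose `l ∈ [0,1]^m` satisfies `f(a) ≤ l` componentwise whenever
`0 ≤ a ≤ l`, and `l_i ≥ δ_i > 0` for all `i`. Then `l` dominates every fixed point of
`f` reachable by iterating `f` from `δ`; and moreover, iterating the monotone map `f`
from any positive starting vector below the escape probability vector `E` (a fixed
point of `f` in `[0,1]^m` with `δ ≤ E`) converges to a fixed point dominated by `l`. -/
theorem stmt_14 (m : ℕ) (dmat : Fin m → Fin m → ℕ) (l δ E : Fin m → ℝ)
    (f : (Fin m → ℝ) → (Fin m → ℝ))
    (hf : ∀ a i, f a i = 1 - 1 / (1 + ∑ j, (dmat i j : ℝ) * a j))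
    (hl : ∀ i, 0 ≤ l i ∧ l i ≤ 1)
    (hδ : ∀ i, 0 < δ i ∧ δ i ≤ l i)
    (hE : (∀ i, 0 ≤ E i ∧ E i ≤ 1) ∧ f E = E ∧ ∀ i, δ i ≤ E i)
    (hdom : ∀ a : Fin m → ℝ, (∀ i, 0 ≤ a i) → (∀ i, a i ≤ l i) → ∀ i, f a i ≤ l i) :
    (∀ x : Fin m → ℝ,
      Filter.Tendsto (fun n => f^[n] δ) Filter.atTop (nhds x) → f x = x →
        ∀ i, x i ≤ l i) ∧
    (∀ a₀ : Fin m → ℝ, (∀ i, 0 < a₀ i) → (∀ i, a₀ i ≤ E i) →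
      ∃ x : Fin m → ℝ, Filter.Tendsto (fun n => f^[n] a₀) Filter.atTop (nhds x) ∧
        f x = x ∧ ∀ i, x i ≤ l i) :=
  stmt_14_general m dmat l δ E f hf hδ hE hdom
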